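/- arXiv:0909.0602 — 2 statements merged into one kernel-verified Lean document; each statement's English description precedes it below -/
import Mathlib

section
/- Let (F₁, F₂) and (G₁, G₂) be the CHFIS pairs, with the same parameters α_{n,m}, β_{n,m}, γ_{n,m}, for generalized interpolation data Δ = {(x_i, y_j, z_{i,j}, t_{i,j})} and Δ* = {(x*_i, y*_j, z_{i,j}, t_{i,j})} respectively, where the knots satisfy the invariance-of-ratio condition and S* ⊆ S, and let R : S → S* be the cell-wise affine transfer map. Suppose M̄ ≥ 0 and δ ∈ (0,1] are such that |F₁(X) − F₁(X̄)| ≤ M̄ · d_M(X,X̄)^δ for all X, X̄ ∈ S. Then sup_{(x,y) ∈ S*} |G₁(x,y) − F₁(x,y)| ≤ (β/(1−α)) · sup_{(x,y) ∈ S} |G₂(R(x,y)) − F₂(x,y)| + ((1+α)/(1−α)) · M̄ · max{ (|x_n − x*_n| + |y_m − y*_m|)^δ : 0 ≤ n ≤ N, 0 ≤ m ≤ M }, where α = max_{n,m}|α_{n,m}| and β = max_{n,m}|β_{n,m}|. -/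
open Real Set

noncomputable section

/-- `z_eva` (resp. `t_eva`) from the paper: `z N M - z N 0 - z 0 M + z 0 0`. -/
def eva (N M : ℕ) (z : ℕ → ℕ → ℝ) : ℝ := z N M - z N 0 - z 0 M + z 0 0

/-- The coefficient `g_{n,m}` determined by the join-up conditions. -/
def gCoef (N M : ℕ) (x y : ℕ → ℝ) (z t : ℕ → ℕ → ℝ) (a b : ℕ → ℕ → ℝ) (n m : ℕ) : ℝ :=
  (z (n-1) (m-1) - z (n-1) m - z n (m-1) + z n m
    - a n m * eva N M z - b n m * eva N M t) / ((x 0 - x N) * (y 0 - y M))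

/-- The coefficient `e_{n,m}`. -/
def eCoef (N M : ℕ) (x y : ℕ → ℝ) (z t : ℕ → ℕ → ℝ) (a b : ℕ → ℕ → ℝ) (n m : ℕ) : ℝ :=
  (z (n-1) (m-1) - z n (m-1) - a n m * (z 0 0 - z N 0) - b n m * (t 0 0 - t N 0)
    - gCoef N M x y z t a b n m * (x 0 - x N) * y 0) / (x 0 - x N)

/-- The coefficient `f_{n,m}`. -/
def fCoef (N M : ℕ) (x y : ℕ → ℝ) (z t : ℕ → ℕ → ℝ) (a b : ℕ → ℕ → ℝ) (n m : ℕ) : ℝ :=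
  (z (n-1) (m-1) - z (n-1) m - a n m * (z 0 0 - z 0 M) - b n m * (t 0 0 - t 0 M)
    - gCoef N M x y z t a b n m * (y 0 - y M) * x 0) / (y 0 - y M)

/-- The coefficient `k_{n,m}`. -/
def kCoef (N M : ℕ) (x y : ℕ → ℝ) (z t : ℕ → ℕ → ℝ) (a b : ℕ → ℕ → ℝ) (n m : ℕ) : ℝ :=
  z n m - eCoef N M x y z t a b n m * x N - fCoef N M x y z t a b n m * y M
    - a n m * z N M - b n m * t N M - gCoef N M x y z t a b n m * x N * y M

/-- `p_{n,m}(X,Y) = e_{n,m} X + f_{n,m} Y + g_{n,m} X Y + k_{n,m}`. -/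
def pMap (N M : ℕ) (x y : ℕ → ℝ) (z t : ℕ → ℕ → ℝ) (a b : ℕ → ℕ → ℝ) (n m : ℕ)
    (X Y : ℝ) : ℝ :=
  eCoef N M x y z t a b n m * X + fCoef N M x y z t a b n m * Y
    + gCoef N M x y z t a b n m * X * Y + kCoef N M x y z t a b n m

/-- `q_{n,m}(X,Y) = ẽ_{n,m} X + f̃_{n,m} Y + g̃_{n,m} X Y + k̃_{n,m}`; it is `p` built from the
data `t` with parameters `γ` and `0`. -/
def qMap (N M : ℕ) (x y : ℕ → ℝ) (t : ℕ → ℕ → ℝ) (c : ℕ → ℕ → ℝ) (n m : ℕ) (X Y : ℝ) : ℝ :=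
  pMap N M x y t t c (fun _ _ => 0) n m X Y

/-- `φ_n` (resp. `ψ_m`): the affine map of `[x₀, x_N]` onto `[x_{n-1}, x_n]`. -/
def phiMap (N : ℕ) (x : ℕ → ℝ) (n : ℕ) (X : ℝ) : ℝ :=
  x (n-1) + (x n - x (n-1)) * (X - x 0) / (x N - x 0)

/-- Validity of generalized interpolation data: `N, M ≥ 1`, strictly increasing knots,
`|α_{n,m}| < 1` and `|β_{n,m}| + |γ_{n,m}| < 1`. -/
structure DataOK (N M : ℕ) (x y : ℕ → ℝ) (a b c : ℕ → ℕ → ℝ) : Prop where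
  hN : 1 ≤ N
  hM : 1 ≤ M
  hx : ∀ i < N, x i < x (i+1)
  hy : ∀ j < M, y j < y (j+1)
  ha : ∀ n m, 1 ≤ n → n ≤ N → 1 ≤ m → m ≤ M → |a n m| < 1
  hbc : ∀ n m, 1 ≤ n → n ≤ N → 1 ≤ m → m ≤ M → |b n m| + |c n m| < 1

/-- `(F₁, F₂)` is the CHFIS pair for the generalized interpolation data. -/
def IsCHFIS (N M : ℕ) (x y : ℕ → ℝ) (z t : ℕ → ℕ → ℝ) (a b c : ℕ → ℕ → ℝ)
    (F₁ F₂ : ℝ → ℝ → ℝ) : Prop :=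
  ContinuousOn (fun P : ℝ × ℝ => F₁ P.1 P.2) (Icc (x 0) (x N) ×ˢ Icc (y 0) (y M)) ∧
  ContinuousOn (fun P : ℝ × ℝ => F₂ P.1 P.2) (Icc (x 0) (x N) ×ˢ Icc (y 0) (y M)) ∧
  (∀ i ≤ N, ∀ j ≤ M, F₁ (x i) (y j) = z i j ∧ F₂ (x i) (y j) = t i j) ∧
  ∀ n m, 1 ≤ n → n ≤ N → 1 ≤ m → m ≤ M →
    ∀ X ∈ Icc (x 0) (x N), ∀ Y ∈ Icc (y 0) (y M),
      F₁ (phiMap N x n X) (phiMap M y m Y)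
        = a n m * F₁ X Y + b n m * F₂ X Y + pMap N M x y z t a b n m X Y ∧
      F₂ (phiMap N x n X) (phiMap M y m Y)
        = c n m * F₂ X Y + qMap N M x y t c n m X Y

/-- The invariance-of-ratio condition between the knots `x, y` and the knots `xs, ys`. -/
def RatioInv (N M : ℕ) (x y xs ys : ℕ → ℝ) : Prop :=
  (∀ n, 1 ≤ n → n ≤ N → (x 0 - x N) / (xs 0 - xs N) = (x (n-1) - x n) / (xs (n-1) - xs n)) ∧
  (∀ m, 1 ≤ m → m ≤ M → (y 0 - y M) / (ys 0 - ys M) = (y (m-1) - y m) / (ys (m-1) - ys m))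

/-- `T : [x₀, x_N] → [xs₀, xs_N]` is the cell-wise affine transfer map, sending
`[x_{n-1}, x_n]` affinely onto `[xs_{n-1}, xs_n]` (one coordinate of `R` resp. `K`). -/
def IsTransfer (N : ℕ) (x xs : ℕ → ℝ) (T : ℝ → ℝ) : Prop :=
  ∀ n, 1 ≤ n → n ≤ N → ∀ X ∈ Icc (x (n-1)) (x n),
    T X = xs (n-1) + (xs n - xs (n-1)) * (X - x (n-1)) / (x n - x (n-1))

/-- `max { |a n m| : 1 ≤ n ≤ N, 1 ≤ m ≤ M }` (as an `sSup`). -/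
def supParam (N M : ℕ) (a : ℕ → ℕ → ℝ) : ℝ :=
  sSup {v : ℝ | ∃ n m, 1 ≤ n ∧ n ≤ N ∧ 1 ≤ m ∧ m ≤ M ∧ v = |a n m|}

/-- `max { (|x_n - xs_n| + |y_m - ys_m|)^δ : 0 ≤ n ≤ N, 0 ≤ m ≤ M }` (as an `sSup`). -/
def supKnotDiff (N M : ℕ) (x xs y ys : ℕ → ℝ) (d : ℝ) : ℝ :=
  sSup {v : ℝ | ∃ n m, n ≤ N ∧ m ≤ M ∧ v = (|x n - xs n| + |y m - ys m|) ^ d}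

/-- `max { |z_{n,m} - zs_{n,m}| : 0 ≤ n ≤ N, 0 ≤ m ≤ M }` (as an `sSup`). -/
def supValDiff (N M : ℕ) (z zs : ℕ → ℕ → ℝ) : ℝ :=
  sSup {v : ℝ | ∃ n m, n ≤ N ∧ m ≤ M ∧ v = |z n m - zs n m|}

/-- `max { |z_{i,j} - z_{k,l}| : 0 ≤ i,j,k,l ≤ N }` (as an `sSup`). -/
def supPairDiff (N : ℕ) (z : ℕ → ℕ → ℝ) : ℝ :=
  sSup {v : ℝ | ∃ i j k l, i ≤ N ∧ j ≤ N ∧ k ≤ N ∧ l ≤ N ∧ v = |z i j - z k l|}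

/-!
By invariance of ratio the starred knots are the images of the unstarred ones under one affine map
`A × B` of `S` onto `S*`. Hence the transfer map `R` is `A × B`, it conjugates `φ_n, ψ_m` to
`φ*_n, ψ*_m`, and it carries `p_{n,m}` to `p*_{n,m}`, both being bilinear interpolants of the same
corner values. So `Φ = G₁ ∘ R - F₁` satisfies `Φ ∘ (φ_n, ψ_m) = α_{n,m} Φ + β_{n,m} (G₂ ∘ R - F₂)`,
and as the cells cover `S`, `‖Φ‖ ≤ α ‖Φ‖ + β ‖G₂ ∘ R - F₂‖`. For `X ∈ S*` compare `G₁ X` with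
`F₁ (R⁻¹ X)`: the Hölder bound applies, and `|R⁻¹ X - X|` is affine in `X`, hence at most the
larger knot displacement at the ends.
-/

section Rescale

variable {a b a' b' p q X : ℝ}

def rescale (a b a' b' X : ℝ) : ℝ := a' + (b' - a') * (X - a) / (b - a)

theorem rescale_left : rescale a b a' b' a = a' := by
  simp [rescale]

theorem rescale_rescale (hab : a ≠ b) (ha'b' : a' ≠ b') :
    rescale a' b' a b (rescale a b a' b' X) = X := by
  have : b - a ≠ 0 := sub_ne_zero.mpr hab.symm
  have : b' - a' ≠ 0 := sub_ne_zero.mpr ha'b'.symm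
  simp only [rescale]
  field_simp
  ring

theorem rescale_mem_Icc (hab : a < b) (ha'b' : a' ≤ b') (hX : X ∈ Icc a b) :
    rescale a b a' b' X ∈ Icc a' b' := by
  have hs : (X - a) / (b - a) ∈ Icc (0 : ℝ) 1 :=
    ⟨div_nonneg (by linarith [hX.1]) (by linarith),
      (div_le_one (by linarith)).mpr (by linarith [hX.2])⟩
  have : rescale a b a' b' X = a' + (b' - a') * ((X - a) / (b - a)) := by
    simp only [rescale]; ring
  rw [this]
  constructor <;> nlinarith [hs.1, hs.2]

theorem continuous_rescale : Continuous (rescale a b a' b') := by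
  unfold rescale
  fun_prop

theorem rescale_of_rescale_endpoints (hab : a ≠ b) (hpq : p ≠ q) :
    rescale p q (rescale a b a' b' p) (rescale a b a' b' q) X = rescale a b a' b' X := by
  have : b - a ≠ 0 := sub_ne_zero.mpr hab.symm
  have : q - p ≠ 0 := sub_ne_zero.mpr hpq.symm
  simp only [rescale]
  field_simp
  ring

theorem rescale_rescale_comm (hab : a ≠ b) (ha'b' : a' ≠ b') :
    rescale a' b' (rescale a b a' b' p) (rescale a b a' b' q) (rescale a b a' b' X)
      = rescale a b a' b' (rescale a b p q X) := by
  have : b - a ≠ 0 := sub_ne_zero.mpr hab.symm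
  have : b' - a' ≠ 0 := sub_ne_zero.mpr ha'b'.symm
  simp only [rescale]
  field_simp
  ring

theorem rescale_sub_div (ha'b' : a' ≠ b') :
    (rescale a b a' b' X - a') / (b' - a') = (X - a) / (b - a) := by
  have : b' - a' ≠ 0 := sub_ne_zero.mpr ha'b'.symm
  simp only [rescale]
  field_simp
  ring

theorem abs_rescale_sub_le (hab : a < b) (hX : X ∈ Icc a b) :
    |rescale a b a' b' X - X| ≤ max |a' - a| |b' - b| := by
  set s := (X - a) / (b - a)
  have hs0 : 0 ≤ s := div_nonneg (by linarith [hX.1]) (by linarith)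
  have hs1 : s ≤ 1 := (div_le_one (by linarith)).mpr (by linarith [hX.2])
  have hconv : rescale a b a' b' X - X = (1 - s) * (a' - a) + s * (b' - b) := by
    have : b - a ≠ 0 := by linarith
    simp only [rescale, s]
    field_simp
    ring
  calc |rescale a b a' b' X - X| ≤ (1 - s) * |a' - a| + s * |b' - b| := by
        rw [hconv]
        refine (abs_add_le _ _).trans_eq ?_
        rw [abs_mul, abs_mul, abs_of_nonneg (by linarith), abs_of_nonneg hs0]
    _ ≤ (1 - s) * max |a' - a| |b' - b| + s * max |a' - a| |b' - b| := by
        gcongr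
        · exact le_max_left _ _
        · exact le_max_right _ _
    _ = max |a' - a| |b' - b| := by ring

end Rescale

section Knots

theorem exists_cell_mem_Icc (x : ℕ → ℝ) {N : ℕ} (hN : 1 ≤ N) {X : ℝ} (hX : X ∈ Icc (x 0) (x N)) :
    ∃ n, 1 ≤ n ∧ n ≤ N ∧ X ∈ Icc (x (n - 1)) (x n) := by
  induction N, hN using Nat.le_induction with
  | base => exact ⟨1, le_rfl, le_rfl, hX⟩
  | succ N hN ih =>
    by_cases hXN : X ≤ x N
    · obtain ⟨n, h1, h2, hn⟩ := ih ⟨hX.1, hXN⟩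
      exact ⟨n, h1, by omega, hn⟩
    · exact ⟨N + 1, by omega, le_rfl, le_of_not_ge hXN, hX.2⟩

theorem DataOK.strictMonoOn_x {N M : ℕ} {x y : ℕ → ℝ} {a b c : ℕ → ℕ → ℝ}
    (hD : DataOK N M x y a b c) : StrictMonoOn x (Iic N) :=
  strictMonoOn_Iic_of_lt_succ hD.hx

theorem DataOK.strictMonoOn_y {N M : ℕ} {x y : ℕ → ℝ} {a b c : ℕ → ℕ → ℝ}
    (hD : DataOK N M x y a b c) : StrictMonoOn y (Iic M) :=
  strictMonoOn_Iic_of_lt_succ hD.hy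

theorem lt_of_strictMonoOn_Iic {N : ℕ} {x : ℕ → ℝ} (hx : StrictMonoOn x (Iic N)) {n : ℕ}
    (hn : 1 ≤ n) (hnN : n ≤ N) : x (n - 1) < x n :=
  hx (mem_Iic.mpr (by omega)) (mem_Iic.mpr hnN) (by omega)

/-- Invariance of ratio says that each cell of `xs` has the same length as the corresponding cell
of `x`, up to the common factor `(xs N - xs 0) / (x N - x 0)`. -/
theorem knot_eq_rescale_of_ratio {N : ℕ} {x xs : ℕ → ℝ} (hx : x 0 ≠ x N) (hxs : xs 0 ≠ xs N)
    (hcell : ∀ n, 1 ≤ n → n ≤ N → xs (n - 1) ≠ xs n)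
    (hratio : ∀ n, 1 ≤ n → n ≤ N →
      (x 0 - x N) / (xs 0 - xs N) = (x (n - 1) - x n) / (xs (n - 1) - xs n)) :
    ∀ k ≤ N, xs k = rescale (x 0) (x N) (xs 0) (xs N) (x k) := by
  intro k hk
  induction k with
  | zero => exact rescale_left.symm
  | succ k ih =>
    have hcross := hratio (k + 1) (by omega) hk
    have hk' := hcell (k + 1) (by omega) hk
    simp only [Nat.add_sub_cancel] at hcross hk'
    rw [div_eq_div_iff (sub_ne_zero.mpr hxs) (sub_ne_zero.mpr hk')] at hcross
    have hprev := ih (by omega)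
    have : x N - x 0 ≠ 0 := sub_ne_zero.mpr hx.symm
    simp only [rescale] at hprev ⊢
    field_simp at hprev ⊢
    linear_combination hprev + hcross

theorem IsTransfer.eq_rescale {N : ℕ} {x xs : ℕ → ℝ} {T : ℝ → ℝ} (hT : IsTransfer N x xs T)
    (hN : 1 ≤ N) (hx : StrictMonoOn x (Iic N))
    (hknots : ∀ k ≤ N, xs k = rescale (x 0) (x N) (xs 0) (xs N) (x k)) :
    ∀ X ∈ Icc (x 0) (x N), T X = rescale (x 0) (x N) (xs 0) (xs N) X := by
  intro X hX
  obtain ⟨n, hn1, hnN, hXn⟩ := exists_cell_mem_Icc x hN hX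
  have hcell := lt_of_strictMonoOn_Iic hx hn1 hnN
  have h0N := hx (mem_Iic.mpr (Nat.zero_le N)) (mem_Iic.mpr le_rfl) (by omega)
  rw [hT n hn1 hnN X hXn, hknots (n - 1) (by omega), hknots n hnN]
  exact rescale_of_rescale_endpoints h0N.ne hcell.ne

end Knots

section CornerInterpolation

variable (N M : ℕ) (x y xs ys : ℕ → ℝ) (z t a b : ℕ → ℕ → ℝ) (n m : ℕ)

/-- `p_{n,m}` in normalized coordinates; the join-up conditions fix its corner values
independently of the knots. -/
def pCornerInterp (u v : ℝ) : ℝ :=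
  (1 - u) * (1 - v) * (z (n - 1) (m - 1) - a n m * z 0 0 - b n m * t 0 0)
    + (1 - u) * v * (z (n - 1) m - a n m * z 0 M - b n m * t 0 M)
    + u * (1 - v) * (z n (m - 1) - a n m * z N 0 - b n m * t N 0)
    + u * v * (z n m - a n m * z N M - b n m * t N M)

theorem pMap_eq_pCornerInterp (hx : x 0 ≠ x N) (hy : y 0 ≠ y M) (X Y : ℝ) :
    pMap N M x y z t a b n m X Y
      = pCornerInterp N M z t a b n m ((X - x 0) / (x N - x 0)) ((Y - y 0) / (y M - y 0)) := by
  have : x 0 - x N ≠ 0 := sub_ne_zero.mpr hx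
  have : y 0 - y M ≠ 0 := sub_ne_zero.mpr hy
  have : x N - x 0 ≠ 0 := sub_ne_zero.mpr hx.symm
  have : y M - y 0 ≠ 0 := sub_ne_zero.mpr hy.symm
  simp only [pCornerInterp, pMap, kCoef, eCoef, fCoef, gCoef, eva]
  field_simp
  ring

theorem pMap_rescale (hx : x 0 ≠ x N) (hy : y 0 ≠ y M) (hxs : xs 0 ≠ xs N) (hys : ys 0 ≠ ys M)
    (X Y : ℝ) :
    pMap N M xs ys z t a b n m
        (rescale (x 0) (x N) (xs 0) (xs N) X) (rescale (y 0) (y M) (ys 0) (ys M) Y)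
      = pMap N M x y z t a b n m X Y := by
  rw [pMap_eq_pCornerInterp N M xs ys z t a b n m hxs hys,
    pMap_eq_pCornerInterp N M x y z t a b n m hx hy, rescale_sub_div hxs, rescale_sub_div hys]

end CornerInterpolation

section AbsVals

variable {a b c d : ℝ} {h h' Φ Ψ : ℝ → ℝ → ℝ}

def absValsOn (a b c d : ℝ) (h : ℝ → ℝ → ℝ) : Set ℝ :=
  {v | ∃ X Y, X ∈ Icc a b ∧ Y ∈ Icc c d ∧ v = |h X Y|}

theorem bddAbove_absValsOn (hh : ContinuousOn (fun P : ℝ × ℝ => h P.1 P.2) (Icc a b ×ˢ Icc c d)) :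
    BddAbove (absValsOn a b c d h) := by
  obtain ⟨C, hC⟩ := (isCompact_Icc.prod isCompact_Icc).exists_bound_of_continuousOn hh
  refine ⟨C, ?_⟩
  rintro v ⟨X, Y, hX, hY, rfl⟩
  simpa using hC (X, Y) ⟨hX, hY⟩

theorem absValsOn_congr (heq : ∀ X ∈ Icc a b, ∀ Y ∈ Icc c d, h X Y = h' X Y) :
    absValsOn a b c d h = absValsOn a b c d h' := by
  ext v
  constructor <;> rintro ⟨X, Y, hX, hY, rfl⟩ <;> exact ⟨X, Y, hX, hY, by rw [heq X hX Y hY]⟩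

theorem sSup_absValsOn_le_of_contraction {α β : ℝ} (hab : a ≤ b) (hcd : c ≤ d)
    (hΦ : BddAbove (absValsOn a b c d Φ)) (hΨ : BddAbove (absValsOn a b c d Ψ))
    (hα0 : 0 ≤ α) (hα1 : α < 1) (hβ : 0 ≤ β)
    (hcontr : ∀ X ∈ Icc a b, ∀ Y ∈ Icc c d, ∃ X' ∈ Icc a b, ∃ Y' ∈ Icc c d,
      |Φ X Y| ≤ α * |Φ X' Y'| + β * |Ψ X' Y'|) :
    sSup (absValsOn a b c d Φ) ≤ β / (1 - α) * sSup (absValsOn a b c d Ψ) := by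
  have hne : (absValsOn a b c d Φ).Nonempty :=
    ⟨_, a, c, left_mem_Icc.mpr hab, left_mem_Icc.mpr hcd, rfl⟩
  have hsup : sSup (absValsOn a b c d Φ)
      ≤ α * sSup (absValsOn a b c d Φ) + β * sSup (absValsOn a b c d Ψ) := by
    refine csSup_le hne ?_
    rintro v ⟨X, Y, hX, hY, rfl⟩
    obtain ⟨X', hX', Y', hY', hle⟩ := hcontr X hX Y hY
    refine hle.trans ?_
    gcongr
    · exact le_csSup hΦ ⟨X', Y', hX', hY', rfl⟩
    · exact le_csSup hΨ ⟨X', Y', hX', hY', rfl⟩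
  rw [div_mul_eq_mul_div, le_div_iff₀ (sub_pos.mpr hα1)]
  linarith

end AbsVals

section Maxima

variable {N M : ℕ}

theorem finite_supParam_set (a : ℕ → ℕ → ℝ) :
    {v : ℝ | ∃ n m, 1 ≤ n ∧ n ≤ N ∧ 1 ≤ m ∧ m ≤ M ∧ v = |a n m|}.Finite := by
  refine (((finite_Iic N).prod (finite_Iic M)).image fun p : ℕ × ℕ => |a p.1 p.2|).subset ?_
  rintro v ⟨n, m, -, hn, -, hm, rfl⟩
  exact ⟨(n, m), ⟨hn, hm⟩, rfl⟩

theorem abs_le_supParam (a : ℕ → ℕ → ℝ) {n m : ℕ} (hn : 1 ≤ n) (hnN : n ≤ N) (hm : 1 ≤ m)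
    (hmM : m ≤ M) : |a n m| ≤ supParam N M a :=
  le_csSup (finite_supParam_set a).bddAbove ⟨n, m, hn, hnN, hm, hmM, rfl⟩

theorem supParam_nonneg (a : ℕ → ℕ → ℝ) : 0 ≤ supParam N M a := by
  refine Real.sSup_nonneg ?_
  rintro v ⟨n, m, -, -, -, -, rfl⟩
  exact abs_nonneg _

theorem DataOK.supParam_lt_one {x y : ℕ → ℝ} {a b c : ℕ → ℕ → ℝ}
    (hD : DataOK N M x y a b c) : supParam N M a < 1 := by
  obtain ⟨n, m, hn, hnN, hm, hmM, hsup⟩ : supParam N M a ∈ _ :=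
    Set.Nonempty.csSup_mem ⟨_, 1, 1, le_rfl, hD.hN, le_rfl, hD.hM, rfl⟩ (finite_supParam_set a)
  rw [hsup]
  exact hD.ha n m hn hnN hm hmM

theorem le_supKnotDiff (x xs y ys : ℕ → ℝ) (δ : ℝ) {n m : ℕ} (hn : n ≤ N) (hm : m ≤ M) :
    (|x n - xs n| + |y m - ys m|) ^ δ ≤ supKnotDiff N M x xs y ys δ := by
  refine le_csSup (Set.Finite.bddAbove ?_) ⟨n, m, hn, hm, rfl⟩
  refine (((finite_Iic N).prod (finite_Iic M)).image
    fun p : ℕ × ℕ => (|x p.1 - xs p.1| + |y p.2 - ys p.2|) ^ δ).subset ?_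
  rintro v ⟨n, m, hn, hm, rfl⟩
  exact ⟨(n, m), ⟨hn, hm⟩, rfl⟩

theorem supKnotDiff_nonneg (x xs y ys : ℕ → ℝ) (δ : ℝ) : 0 ≤ supKnotDiff N M x xs y ys δ := by
  refine Real.sSup_nonneg ?_
  rintro v ⟨n, m, -, -, rfl⟩
  positivity

theorem rpow_max_le_supKnotDiff (x xs y ys : ℕ → ℝ) (δ : ℝ) :
    (max |x 0 - xs 0| |x N - xs N| + max |y 0 - ys 0| |y M - ys M|) ^ δ
      ≤ supKnotDiff N M x xs y ys δ := by
  obtain ⟨n, hn, hxn⟩ : ∃ n ≤ N, max |x 0 - xs 0| |x N - xs N| = |x n - xs n| :=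
    (max_choice _ _).elim (fun h => ⟨0, Nat.zero_le N, h⟩) (fun h => ⟨N, le_rfl, h⟩)
  obtain ⟨m, hm, hym⟩ : ∃ m ≤ M, max |y 0 - ys 0| |y M - ys M| = |y m - ys m| :=
    (max_choice _ _).elim (fun h => ⟨0, Nat.zero_le M, h⟩) (fun h => ⟨M, le_rfl, h⟩)
  rw [hxn, hym]
  exact le_supKnotDiff x xs y ys δ hn hm

end Maxima

theorem continuousOn_comp_rescale_sub {a b c d a' b' c' d' : ℝ} {F G : ℝ → ℝ → ℝ}
    (hF : ContinuousOn (fun P : ℝ × ℝ => F P.1 P.2) (Icc a b ×ˢ Icc c d))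
    (hG : ContinuousOn (fun P : ℝ × ℝ => G P.1 P.2) (Icc a' b' ×ˢ Icc c' d'))
    (hab : a < b) (hcd : c < d) (ha'b' : a' ≤ b') (hc'd' : c' ≤ d') :
    ContinuousOn (fun P : ℝ × ℝ => G (rescale a b a' b' P.1) (rescale c d c' d' P.2) - F P.1 P.2)
      (Icc a b ×ˢ Icc c d) := by
  refine ContinuousOn.sub (hG.comp (f := fun P : ℝ × ℝ => (rescale a b a' b' P.1,
    rescale c d c' d' P.2)) ((continuous_rescale.comp continuous_fst).prodMk
    (continuous_rescale.comp continuous_snd)).continuousOn ?_) hF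
  exact fun P hP => ⟨rescale_mem_Icc hab ha'b' hP.1, rescale_mem_Icc hcd hc'd' hP.2⟩

section CHFIS

variable {N M : ℕ} {x y xs ys : ℕ → ℝ} {z t a b c : ℕ → ℕ → ℝ} {F₁ F₂ G₁ G₂ : ℝ → ℝ → ℝ}

theorem phiMap_eq_rescale (n : ℕ) : phiMap N x n = rescale (x 0) (x N) (x (n - 1)) (x n) := rfl

theorem DataOK.x_zero_lt (hD : DataOK N M x y a b c) : x 0 < x N :=
  hD.strictMonoOn_x (mem_Iic.mpr (Nat.zero_le N)) (mem_Iic.mpr le_rfl) (by have := hD.hN; omega)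

theorem DataOK.y_zero_lt (hD : DataOK N M x y a b c) : y 0 < y M :=
  hD.strictMonoOn_y (mem_Iic.mpr (Nat.zero_le M)) (mem_Iic.mpr le_rfl) (by have := hD.hM; omega)

theorem RatioInv.knots_eq_rescale (hratio : RatioInv N M x y xs ys)
    (hD : DataOK N M x y a b c) (hDs : DataOK N M xs ys a b c) :
    (∀ k ≤ N, xs k = rescale (x 0) (x N) (xs 0) (xs N) (x k)) ∧
      ∀ k ≤ M, ys k = rescale (y 0) (y M) (ys 0) (ys M) (y k) :=
  ⟨knot_eq_rescale_of_ratio hD.x_zero_lt.ne hDs.x_zero_lt.ne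
      (fun _ hn hnN => (lt_of_strictMonoOn_Iic hDs.strictMonoOn_x hn hnN).ne) hratio.1,
    knot_eq_rescale_of_ratio hD.y_zero_lt.ne hDs.y_zero_lt.ne
      (fun _ hm hmM => (lt_of_strictMonoOn_Iic hDs.strictMonoOn_y hm hmM).ne) hratio.2⟩

/-- Since the rescaling of the knots conjugates `φ_n` to `φ*_n` and carries `p_{n,m}` to
`p*_{n,m}`, the difference `G ∘ R - F` obeys the homogeneous form of the functional equations. -/
theorem IsCHFIS.sub_phiMap (hF : IsCHFIS N M x y z t a b c F₁ F₂)
    (hG : IsCHFIS N M xs ys z t a b c G₁ G₂)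
    (hx : x 0 < x N) (hy : y 0 < y M) (hxs : xs 0 < xs N) (hys : ys 0 < ys M)
    (hxk : ∀ k ≤ N, xs k = rescale (x 0) (x N) (xs 0) (xs N) (x k))
    (hyk : ∀ k ≤ M, ys k = rescale (y 0) (y M) (ys 0) (ys M) (y k))
    {n m : ℕ} (hn : 1 ≤ n) (hnN : n ≤ N) (hm : 1 ≤ m) (hmM : m ≤ M)
    {P Q : ℝ} (hP : P ∈ Icc (x 0) (x N)) (hQ : Q ∈ Icc (y 0) (y M)) :
    G₁ (rescale (x 0) (x N) (xs 0) (xs N) (phiMap N x n P))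
        (rescale (y 0) (y M) (ys 0) (ys M) (phiMap M y m Q))
      - F₁ (phiMap N x n P) (phiMap M y m Q)
      = a n m * (G₁ (rescale (x 0) (x N) (xs 0) (xs N) P) (rescale (y 0) (y M) (ys 0) (ys M) Q)
          - F₁ P Q)
        + b n m * (G₂ (rescale (x 0) (x N) (xs 0) (xs N) P)
          (rescale (y 0) (y M) (ys 0) (ys M) Q) - F₂ P Q) := by
  have hphi : rescale (x 0) (x N) (xs 0) (xs N) (phiMap N x n P)
      = phiMap N xs n (rescale (x 0) (x N) (xs 0) (xs N) P) := by
    rw [phiMap_eq_rescale, phiMap_eq_rescale, hxk (n - 1) (by omega), hxk n hnN]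
    exact (rescale_rescale_comm hx.ne hxs.ne).symm
  have hpsi : rescale (y 0) (y M) (ys 0) (ys M) (phiMap M y m Q)
      = phiMap M ys m (rescale (y 0) (y M) (ys 0) (ys M) Q) := by
    rw [phiMap_eq_rescale, phiMap_eq_rescale, hyk (m - 1) (by omega), hyk m hmM]
    exact (rescale_rescale_comm hy.ne hys.ne).symm
  rw [hphi, hpsi, (hG.2.2.2 n m hn hnN hm hmM _ (rescale_mem_Icc hx hxs.le hP) _
      (rescale_mem_Icc hy hys.le hQ)).1, (hF.2.2.2 n m hn hnN hm hmM P hP Q hQ).1,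
    pMap_rescale N M x y xs ys z t a b n m hx.ne hy.ne hxs.ne hys.ne]
  ring

theorem IsCHFIS.sSup_absValsOn_sub_le (hD : DataOK N M x y a b c) (hDs : DataOK N M xs ys a b c)
    (hF : IsCHFIS N M x y z t a b c F₁ F₂) (hG : IsCHFIS N M xs ys z t a b c G₁ G₂)
    (hxk : ∀ k ≤ N, xs k = rescale (x 0) (x N) (xs 0) (xs N) (x k))
    (hyk : ∀ k ≤ M, ys k = rescale (y 0) (y M) (ys 0) (ys M) (y k)) :
    sSup (absValsOn (x 0) (x N) (y 0) (y M) fun P Q =>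
        G₁ (rescale (x 0) (x N) (xs 0) (xs N) P) (rescale (y 0) (y M) (ys 0) (ys M) Q) - F₁ P Q)
      ≤ supParam N M b / (1 - supParam N M a) *
        sSup (absValsOn (x 0) (x N) (y 0) (y M) fun P Q =>
          G₂ (rescale (x 0) (x N) (xs 0) (xs N) P) (rescale (y 0) (y M) (ys 0) (ys M) Q)
            - F₂ P Q) := by
  have hx := hD.x_zero_lt
  have hy := hD.y_zero_lt
  have hxs := hDs.x_zero_lt
  have hys := hDs.y_zero_lt
  refine sSup_absValsOn_le_of_contraction hx.le hy.le
    (bddAbove_absValsOn (continuousOn_comp_rescale_sub hF.1 hG.1 hx hy hxs.le hys.le))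
    (bddAbove_absValsOn (continuousOn_comp_rescale_sub hF.2.1 hG.2.1 hx hy hxs.le hys.le))
    (supParam_nonneg a) hD.supParam_lt_one (supParam_nonneg b) ?_
  intro P hP Q hQ
  obtain ⟨n, hn, hnN, hPn⟩ := exists_cell_mem_Icc x hD.hN hP
  obtain ⟨m, hm, hmM, hQm⟩ := exists_cell_mem_Icc y hD.hM hQ
  have hxn := lt_of_strictMonoOn_Iic hD.strictMonoOn_x hn hnN
  have hym := lt_of_strictMonoOn_Iic hD.strictMonoOn_y hm hmM
  refine ⟨_, rescale_mem_Icc hxn hx.le hPn, _, rescale_mem_Icc hym hy.le hQm, ?_⟩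
  have hphi : phiMap N x n (rescale (x (n - 1)) (x n) (x 0) (x N) P) = P :=
    rescale_rescale hxn.ne hx.ne
  have hpsi : phiMap M y m (rescale (y (m - 1)) (y m) (y 0) (y M) Q) = Q :=
    rescale_rescale hym.ne hy.ne
  have hrec := hF.sub_phiMap hG hx hy hxs hys hxk hyk hn hnN hm hmM
    (rescale_mem_Icc hxn hx.le hPn) (rescale_mem_Icc hym hy.le hQm)
  rw [hphi, hpsi] at hrec
  rw [hrec]
  refine (abs_add_le _ _).trans ?_
  rw [abs_mul, abs_mul]
  gcongr
  · exact abs_le_supParam a hn hnN hm hmM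
  · exact abs_le_supParam b hn hnN hm hmM

end CHFIS

theorem abs_sub_le_sSup_add_supKnotDiff {N M : ℕ} {x y xs ys : ℕ → ℝ} {F G : ℝ → ℝ → ℝ}
    {Mb δ : ℝ} (hx : x 0 < x N) (hy : y 0 < y M) (hxs : xs 0 < xs N) (hys : ys 0 < ys M)
    (hsub : Icc (xs 0) (xs N) ×ˢ Icc (ys 0) (ys M) ⊆ Icc (x 0) (x N) ×ˢ Icc (y 0) (y M))
    (hbdd : BddAbove (absValsOn (x 0) (x N) (y 0) (y M) fun P Q =>
      G (rescale (x 0) (x N) (xs 0) (xs N) P) (rescale (y 0) (y M) (ys 0) (ys M) Q) - F P Q))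
    (hMb : 0 ≤ Mb) (hδ : 0 ≤ δ)
    (hF : ∀ X ∈ Icc (x 0) (x N), ∀ Y ∈ Icc (y 0) (y M),
      ∀ X' ∈ Icc (x 0) (x N), ∀ Y' ∈ Icc (y 0) (y M),
        |F X Y - F X' Y'| ≤ Mb * (|X - X'| + |Y - Y'|) ^ δ)
    {X Y : ℝ} (hX : X ∈ Icc (xs 0) (xs N)) (hY : Y ∈ Icc (ys 0) (ys M)) :
    |G X Y - F X Y| ≤
      sSup (absValsOn (x 0) (x N) (y 0) (y M) fun P Q =>
        G (rescale (x 0) (x N) (xs 0) (xs N) P) (rescale (y 0) (y M) (ys 0) (ys M) Q) - F P Q)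
      + Mb * supKnotDiff N M x xs y ys δ := by
  set P := rescale (xs 0) (xs N) (x 0) (x N) X
  set Q := rescale (ys 0) (ys M) (y 0) (y M) Y
  have hP : P ∈ Icc (x 0) (x N) := rescale_mem_Icc hxs hx.le hX
  have hQ : Q ∈ Icc (y 0) (y M) := rescale_mem_Icc hys hy.le hY
  have hXY := hsub (mk_mem_prod hX hY)
  have hG : |G X Y - F P Q| ≤ sSup (absValsOn (x 0) (x N) (y 0) (y M) fun P Q =>
      G (rescale (x 0) (x N) (xs 0) (xs N) P) (rescale (y 0) (y M) (ys 0) (ys M) Q) - F P Q) := by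
    have hPX : rescale (x 0) (x N) (xs 0) (xs N) P = X := rescale_rescale hxs.ne hx.ne
    have hQY : rescale (y 0) (y M) (ys 0) (ys M) Q = Y := rescale_rescale hys.ne hy.ne
    rw [← hPX, ← hQY]
    exact le_csSup hbdd ⟨P, Q, hP, hQ, rfl⟩
  have hdist : (|P - X| + |Q - Y|) ^ δ ≤ supKnotDiff N M x xs y ys δ := by
    refine le_trans ?_ (rpow_max_le_supKnotDiff x xs y ys δ)
    gcongr
    · exact abs_rescale_sub_le hxs hX
    · exact abs_rescale_sub_le hys hY
  calc |G X Y - F X Y| ≤ |G X Y - F P Q| + |F P Q - F X Y| := abs_sub_le _ _ _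
    _ ≤ _ := add_le_add hG ((hF P hP Q hQ X hXY.1 Y hXY.2).trans (by gcongr))

/-- the intermediate bound
`‖G₁ - F₁‖_{∞,S*} ≤ (β/(1-α)) ‖G₂ ∘ R - F₂‖_{∞,S} + ((1+α)/(1-α)) M̄ max (…)^δ`. -/
theorem chfis_stability_indep_F1_intermediate (N M : ℕ) (x y xs ys : ℕ → ℝ)
    (z t : ℕ → ℕ → ℝ) (a b c : ℕ → ℕ → ℝ)
    (hD : DataOK N M x y a b c) (hDs : DataOK N M xs ys a b c)
    (hratio : RatioInv N M x y xs ys)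
    (hsub : Icc (xs 0) (xs N) ×ˢ Icc (ys 0) (ys M) ⊆ Icc (x 0) (x N) ×ˢ Icc (y 0) (y M))
    (RX RY : ℝ → ℝ)
    (hRX : IsTransfer N x xs RX) (hRY : IsTransfer M y ys RY)
    (F₁ F₂ G₁ G₂ : ℝ → ℝ → ℝ)
    (hF : IsCHFIS N M x y z t a b c F₁ F₂)
    (hG : IsCHFIS N M xs ys z t a b c G₁ G₂)
    (Mb δ : ℝ) (hMb : 0 ≤ Mb) (hδ : δ ∈ Set.Ioc (0:ℝ) 1)
    (hH1 : ∀ X ∈ Icc (x 0) (x N), ∀ Y ∈ Icc (y 0) (y M),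
      ∀ X' ∈ Icc (x 0) (x N), ∀ Y' ∈ Icc (y 0) (y M),
        |F₁ X Y - F₁ X' Y'| ≤ Mb * (|X - X'| + |Y - Y'|) ^ δ) :
    ∀ X ∈ Icc (xs 0) (xs N), ∀ Y ∈ Icc (ys 0) (ys M),
      |G₁ X Y - F₁ X Y| ≤
        supParam N M b / (1 - supParam N M a)
          * sSup {v : ℝ | ∃ X' Y', X' ∈ Icc (x 0) (x N) ∧ Y' ∈ Icc (y 0) (y M) ∧
              v = |G₂ (RX X') (RY Y') - F₂ X' Y'|}
        + (1 + supParam N M a) / (1 - supParam N M a) * Mb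
          * supKnotDiff N M x xs y ys δ := by
  intro X hX Y hY
  obtain ⟨hxk, hyk⟩ := hratio.knots_eq_rescale hD hDs
  have hRX' := hRX.eq_rescale hD.hN hD.strictMonoOn_x hxk
  have hRY' := hRY.eq_rescale hD.hM hD.strictMonoOn_y hyk
  have hR : absValsOn (x 0) (x N) (y 0) (y M) (fun P Q => G₂ (RX P) (RY Q) - F₂ P Q)
      = absValsOn (x 0) (x N) (y 0) (y M) fun P Q =>
        G₂ (rescale (x 0) (x N) (xs 0) (xs N) P) (rescale (y 0) (y M) (ys 0) (ys M) Q)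
          - F₂ P Q :=
    absValsOn_congr fun P hP Q hQ => by rw [hRX' P hP, hRY' Q hQ]
  change _ ≤ _ * sSup (absValsOn (x 0) (x N) (y 0) (y M) _) + _
  rw [hR]
  have hα1 := hD.supParam_lt_one
  have hfactor : 1 ≤ (1 + supParam N M a) / (1 - supParam N M a) :=
    (one_le_div (by linarith)).mpr (by linarith [supParam_nonneg (N := N) (M := M) a])
  refine (abs_sub_le_sSup_add_supKnotDiff hD.x_zero_lt hD.y_zero_lt hDs.x_zero_lt
    hDs.y_zero_lt hsub (bddAbove_absValsOn (continuousOn_comp_rescale_sub hF.1 hG.1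
      hD.x_zero_lt hD.y_zero_lt hDs.x_zero_lt.le hDs.y_zero_lt.le)) hMb hδ.1.le hH1 hX hY).trans ?_
  rw [mul_assoc _ Mb]
  gcongr ?_ + ?_
  · exact hF.sSup_absValsOn_sub_le hD hDs hG hxk hyk
  · exact le_mul_of_one_le_left (mul_nonneg hMb (supKnotDiff_nonneg x xs y ys δ)) hfactor

end
end

section
/- Let x₀ < x₁ < … < x_N, y₀ < y₁ < … < y_M and x*₀ < x*₁ < … < x*_N, y*₀ < y*₁ < … < y*_M be two sets of knots satisfying the invariance-of-ratio condition, with S = [x₀,x_N] × [y₀,y_M] and S* = [x*₀,x*_N] × [y*₀,y*_M]. Define ξ_{n,m}(x,y) = (φ_n(x), ψ_m(y)) on S and ξ*_{n,m}(x,y) = (φ*_n(x), ψ*_m(y)) on S*. Then for every 1 ≤ n ≤ N, 1 ≤ m ≤ M and every (x*,y*) ∈ S*: ξ*_{n,m}(x*,y*) = R(ξ_{n,m}(K(x*,y*))), where R : S → S* is the cell-wise affine transfer map and K : S* → S is its inverse. -/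
open Real Set

noncomputable section

private lemma knots_le {N : ℕ} {x : ℕ → ℝ} (hx : ∀ i < N, x i < x (i+1)) :
    ∀ i j, i ≤ j → j ≤ N → x i ≤ x j := by
  intro i j hij hjN
  induction j with
  | zero => simp_all
  | succ k ih =>
    rcases Nat.lt_or_ge i (k+1) with h | h
    · exact le_trans (ih (Nat.lt_succ_iff.mp h) (le_trans (Nat.le_succ k) hjN))
        (le_of_lt (hx k (Nat.lt_of_succ_le hjN)))
    · have : i = k+1 := le_antisymm hij h
      simp [this]

private lemma knots_lt {N : ℕ} {x : ℕ → ℝ} (hx : ∀ i < N, x i < x (i+1)) :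
    ∀ i j, i < j → j ≤ N → x i < x j := by
  intro i j hij hjN
  have h1 : x i ≤ x (j-1) := knots_le hx i (j-1) (by omega) (by omega)
  have h2 : x (j-1) < x j := by
    have h := hx (j-1) (by omega)
    have e : j - 1 + 1 = j := by omega
    rwa [e] at h
  linarith

private lemma telescope {N : ℕ} {x xs : ℕ → ℝ} {r : ℝ}
    (hincr : ∀ n, 1 ≤ n → n ≤ N → x n - x (n-1) = r * (xs n - xs (n-1))) :
    ∀ k ≤ N, x k - x 0 = r * (xs k - xs 0) := by
  intro k hk
  induction k with
  | zero => simp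
  | succ j ih =>
    have h1 := hincr (j+1) (by omega) hk
    simp only [Nat.add_sub_cancel] at h1
    have h2 := ih (by omega)
    linear_combination h1 + h2

private lemma find_cell {N : ℕ} {xs : ℕ → ℝ} (hN : 1 ≤ N)
    (hxs : ∀ i < N, xs i < xs (i+1)) {Xs : ℝ}
    (h0 : xs 0 ≤ Xs) (h1 : Xs ≤ xs N) :
    ∃ n, 1 ≤ n ∧ n ≤ N ∧ xs (n-1) ≤ Xs ∧ Xs ≤ xs n := by
  classical
  set P : ℕ → Prop := fun k => xs k ≤ Xs with hP
  set n0 := Nat.findGreatest P N with hn0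
  have hspec : P n0 := Nat.findGreatest_spec (Nat.zero_le N) h0
  have hn0N : n0 ≤ N := Nat.findGreatest_le N
  rcases eq_or_lt_of_le hn0N with heq | hlt
  · refine ⟨N, hN, le_refl N, ?_, h1⟩
    have hNle : xs N ≤ Xs := by rw [heq] at hspec; exact hspec
    have : xs (N-1) < xs N := by
      have h := hxs (N-1) (by omega)
      have e : N - 1 + 1 = N := by omega
      rwa [e] at h
    linarith
  · have hnot : ¬ P (n0+1) := Nat.findGreatest_is_greatest (Nat.lt_succ_self n0) hlt
    refine ⟨n0+1, by omega, hlt, ?_, le_of_lt (lt_of_not_ge hnot)⟩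
    simpa using hspec

/-- A cell-wise affine transfer map whose increments are all scaled by the same ratio `r`
coincides with the global affine map. -/
private lemma transfer_affine {N : ℕ} {x xs : ℕ → ℝ} {T : ℝ → ℝ} {r : ℝ}
    (hN : 1 ≤ N) (hxs : ∀ i < N, xs i < xs (i+1))
    (hT : IsTransfer N xs x T)
    (hincr : ∀ n, 1 ≤ n → n ≤ N → x n - x (n-1) = r * (xs n - xs (n-1)))
    {Xs : ℝ} (hXs : Xs ∈ Icc (xs 0) (xs N)) :
    T Xs = x 0 + r * (Xs - xs 0) := by
  obtain ⟨n, hn1, hnN, hl, hr⟩ := find_cell hN hxs hXs.1 hXs.2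
  have hx1 : xs (n-1) < xs n := by
    have h := hxs (n-1) (by omega)
    have e : n - 1 + 1 = n := by omega
    rwa [e] at h
  have hTX := hT n hn1 hnN Xs ⟨hl, hr⟩
  have htel := telescope hincr (n-1) (by omega)
  have hi := hincr n hn1 hnN
  have hne : xs n - xs (n-1) ≠ 0 := ne_of_gt (by linarith)
  rw [hTX, hi]
  have key : r * (xs n - xs (n-1)) * (Xs - xs (n-1)) / (xs n - xs (n-1))
      = r * (Xs - xs (n-1)) := by
    field_simp
  rw [key]
  linear_combination htel

/-- The one-dimensional conjugation: `φ*_n = T_R ∘ φ_n ∘ T_K` under the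
invariance-of-ratio condition. -/
private lemma main1D {N : ℕ} {x xs : ℕ → ℝ} {RX KX : ℝ → ℝ}
    (hN : 1 ≤ N) (hx : ∀ i < N, x i < x (i+1)) (hxs : ∀ i < N, xs i < xs (i+1))
    (hratio : ∀ n, 1 ≤ n → n ≤ N →
      (x 0 - x N) / (xs 0 - xs N) = (x (n-1) - x n) / (xs (n-1) - xs n))
    (hRX : IsTransfer N x xs RX) (hKX : IsTransfer N xs x KX) :
    ∀ n, 1 ≤ n → n ≤ N → ∀ Xs ∈ Icc (xs 0) (xs N),
      phiMap N xs n Xs = RX (phiMap N x n (KX Xs)) := by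
  have hd : x 0 < x N := knots_lt hx 0 N (by omega) le_rfl
  have hc : xs 0 < xs N := knots_lt hxs 0 N (by omega) le_rfl
  have hdne : x N - x 0 ≠ 0 := ne_of_gt (by linarith)
  have hcne : xs N - xs 0 ≠ 0 := ne_of_gt (by linarith)
  set r : ℝ := (x N - x 0) / (xs N - xs 0) with hrdef
  have hincr : ∀ n, 1 ≤ n → n ≤ N → x n - x (n-1) = r * (xs n - xs (n-1)) := by
    intro n hn1 hnN
    have hcell : xs (n-1) < xs n := by
      have h := hxs (n-1) (by omega)
      have e : n - 1 + 1 = n := by omega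
      rwa [e] at h
    have hcellne : xs (n-1) - xs n ≠ 0 := ne_of_lt (by linarith)
    have h := hratio n hn1 hnN
    rw [div_eq_div_iff (by intro h'; exact hcne (by linarith [sub_eq_zero.mp h']))
      hcellne] at h
    rw [hrdef]
    field_simp
    linear_combination -h
  intro n hn1 hnN Xs hXs
  have hK : KX Xs = x 0 + r * (Xs - xs 0) := transfer_affine hN hxs hKX hincr hXs
  have hcell : x (n-1) < x n := by
    have h := hx (n-1) (by omega)
    have e : n - 1 + 1 = n := by omega
    rwa [e] at h
  -- the image point in the cell, rewritten
  have hE : phiMap N x n (KX Xs)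
      = x (n-1) + (x n - x (n-1)) * ((Xs - xs 0) / (xs N - xs 0)) := by
    unfold phiMap
    rw [hK, hrdef]
    field_simp
    ring
  have hs0 : 0 ≤ (Xs - xs 0) / (xs N - xs 0) :=
    div_nonneg (by linarith [hXs.1]) (by linarith)
  have hs1 : (Xs - xs 0) / (xs N - xs 0) ≤ 1 :=
    (div_le_one (by linarith)).mpr (by linarith [hXs.2])
  have hPmem : phiMap N x n (KX Xs) ∈ Icc (x (n-1)) (x n) := by
    rw [hE]
    constructor
    · nlinarith
    · nlinarith
  have hRXP := hRX n hn1 hnN _ hPmem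
  rw [hRXP, hE]
  unfold phiMap
  have hcne' : x n - x (n-1) ≠ 0 := ne_of_gt (by linarith)
  field_simp
  ring

/-- equivalence of the dynamical systems: `ξ*_{n,m} = R ∘ ξ_{n,m} ∘ K` on
`S*`, under the invariance-of-ratio condition. -/
theorem xi_conjugation (N M : ℕ) (x y xs ys : ℕ → ℝ)
    (hN : 1 ≤ N) (hM : 1 ≤ M)
    (hx : ∀ i < N, x i < x (i+1)) (hy : ∀ j < M, y j < y (j+1))
    (hxs : ∀ i < N, xs i < xs (i+1)) (hys : ∀ j < M, ys j < ys (j+1))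
    (hratio : RatioInv N M x y xs ys)
    (RX RY KX KY : ℝ → ℝ)
    (hRX : IsTransfer N x xs RX) (hRY : IsTransfer M y ys RY)
    (hKX : IsTransfer N xs x KX) (hKY : IsTransfer M ys y KY)
    (hinvX : (∀ X ∈ Icc (x 0) (x N), KX (RX X) = X) ∧
             (∀ Xs ∈ Icc (xs 0) (xs N), RX (KX Xs) = Xs))
    (hinvY : (∀ Y ∈ Icc (y 0) (y M), KY (RY Y) = Y) ∧
             (∀ Ys ∈ Icc (ys 0) (ys M), RY (KY Ys) = Ys)) :
    ∀ n m, 1 ≤ n → n ≤ N → 1 ≤ m → m ≤ M →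
      ∀ Xs ∈ Icc (xs 0) (xs N), ∀ Ys ∈ Icc (ys 0) (ys M),
        phiMap N xs n Xs = RX (phiMap N x n (KX Xs)) ∧
        phiMap M ys m Ys = RY (phiMap M y m (KY Ys)) := by
  intro n m hn1 hnN hm1 hmM Xs hXs Ys hYs
  exact ⟨main1D hN hx hxs hratio.1 hRX hKX n hn1 hnN Xs hXs,
         main1D hM hy hys hratio.2 hRY hKY m hm1 hmM Ys hYs⟩

end
end
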